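/- arXiv:2509.07286 — 7 statements merged into one kernel-verified Lean document; each statement's English description precedes it below -/
import Mathlib

section
/- Let $X = \sum_{i=1}^N X_i$ where the $X_i$ are Bernoulli random variables such that for every $k \in [N]$, $\mathbb{E}[X_k \mid X_1,\dots,X_{k-1}] \ge p$ for some $p \in (0,1)$. Let $\mu = Np$. Then for every $0 < \Delta \le \mu/2$, $\Pr[X \le \mu - \Delta] \le \exp\left(-\frac{\Delta^2}{4(\mu-\Delta)}\right)$. -/
/-!
A Chernoff bound for the lower tail. For a `{0,1}`-valued `x` one has
`exp (-t x) = 1 + (e^{-t} - 1) x`, so the hypothesis on conditional means bounds the conditional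
expectation of `exp (-t X k)` given `X 0, …, X (k-1)` by `1 + (e^{-t} - 1) p ≤ exp ((e^{-t} - 1) p)`.
Pulling out the already-measurable factors one at a time yields
`E[exp (-t S)] ≤ exp (N p (e^{-t} - 1))`, and Markov's inequality gives
`P[S ≤ a] ≤ exp (t a + N p (e^{-t} - 1))`. With `m = N p`, `t = Δ / m` and
`e^{-t} ≤ 1 - t + t²/2` the exponent at `a = m - Δ` is at most `-Δ² / (2m)`, which is
`≤ -Δ² / (4(m - Δ))` as soon as `2Δ ≤ m`.
-/

open MeasureTheory ProbabilityTheory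

open Finset in
theorem Real.exp_neg_le_one_sub_add_sq_div_two {t : ℝ} (ht : 0 ≤ t) :
    Real.exp (-t) ≤ 1 - t + t ^ 2 / 2 := by
  have hcubic : 1 + t + t ^ 2 / 2 + t ^ 3 / 6 ≤ Real.exp t := by
    simpa [sum_range_succ, Nat.factorial] using Real.sum_le_exp_of_nonneg ht 4
  -- `(1 - t + t²/2)(1 + t + t²/2 + t³/6) = 1 + t³/6 + t⁴/12 + t⁵/12`
  have hprod : 1 ≤ (1 - t + t ^ 2 / 2) * (1 + t + t ^ 2 / 2 + t ^ 3 / 6) := by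
    nlinarith [pow_nonneg ht 3, pow_nonneg ht 4, pow_nonneg ht 5]
  have hpos : 0 < 1 - t + t ^ 2 / 2 := by nlinarith [sq_nonneg (t - 1)]
  rw [Real.exp_neg, inv_le_iff_one_le_mul₀ (Real.exp_pos t)]
  exact hprod.trans (mul_le_mul_of_nonneg_left hcubic hpos.le)

theorem chernoff_exponent_le {m Δ : ℝ} (hΔ : 0 < Δ) (hm : 2 * Δ ≤ m) :
    Δ / m * (m - Δ) + m * (Real.exp (-(Δ / m)) - 1) ≤ -(Δ ^ 2 / (4 * (m - Δ))) := by
  have hm0 : 0 < m := by linarith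
  have hquad := Real.exp_neg_le_one_sub_add_sq_div_two (div_pos hΔ hm0).le
  have hhalf : Δ / m * (m - Δ) + m * (Real.exp (-(Δ / m)) - 1) ≤ -(Δ ^ 2 / (2 * m)) := by
    calc _ ≤ Δ / m * (m - Δ) + m * (-(Δ / m) + (Δ / m) ^ 2 / 2) := by gcongr; linarith
      _ = -(Δ ^ 2 / (2 * m)) := by field_simp; ring
  refine hhalf.trans (neg_le_neg ?_)
  exact div_le_div_of_nonneg_left (sq_nonneg Δ) (by linarith) (by linarith)

theorem Real.exp_neg_mul_eq_one_add_mul_of_eq_zero_or_eq_one {x : ℝ} (hx : x = 0 ∨ x = 1)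
    (t : ℝ) : Real.exp (-t * x) = 1 + (Real.exp (-t) - 1) * x := by
  rcases hx with rfl | rfl <;> simp

section ProductBound

open Finset

variable {Ω : Type*} {m₀ : MeasurableSpace Ω} {μ : Measure Ω}

theorem condExp_one_add_mul_le [IsFiniteMeasure μ] {m : MeasurableSpace Ω} (hm : m ≤ m₀)
    {X : Ω → ℝ} (hX : Integrable X μ) {c p : ℝ} (hc : c ≤ 0)
    (hpX : ∀ᵐ ω ∂μ, p ≤ μ[X | m] ω) :
    μ[fun ω => 1 + c * X ω | m] ≤ᵐ[μ] fun _ => 1 + c * p := by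
  have hlin : μ[fun ω => 1 + c * X ω | m] =ᵐ[μ] fun ω => 1 + c * μ[X | m] ω := by
    have hadd := condExp_add (integrable_const (1 : ℝ)) (hX.smul c) m (μ := μ)
    rw [condExp_const hm] at hadd
    change μ[(fun _ => (1 : ℝ)) + c • X | m] =ᵐ[μ] _
    filter_upwards [hadd, condExp_smul c X m (μ := μ)] with ω h1 h2
    simpa [h2] using h1
  filter_upwards [hlin, hpX] with ω hω hp
  rw [hω]
  nlinarith

theorem integral_prod_range_le_pow_of_condExp_le [IsProbabilityMeasure μ]
    {F : ℕ → MeasurableSpace Ω} (hF : ∀ k, F k ≤ m₀) {Y : ℕ → Ω → ℝ}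
    (hY : ∀ i k, i < k → Measurable[F k] (Y i)) (hY01 : ∀ i ω, Y i ω ∈ Set.Icc (0 : ℝ) 1)
    {q : ℝ} (hq : 0 ≤ q) {n : ℕ} (hcond : ∀ k < n, μ[Y k | F k] ≤ᵐ[μ] fun _ => q) :
    ∫ ω, ∏ i ∈ range n, Y i ω ∂μ ≤ q ^ n := by
  induction n with
  | zero => simp
  | succ n ih =>
    set g : Ω → ℝ := fun ω => ∏ i ∈ range n, Y i ω
    have hg01 : ∀ ω, g ω ∈ Set.Icc (0 : ℝ) 1 := fun ω =>
      ⟨prod_nonneg fun i _ => (hY01 i ω).1,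
        prod_le_one (fun i _ => (hY01 i ω).1) fun i _ => (hY01 i ω).2⟩
    have hgF : Measurable[F n] g :=
      Finset.measurable_prod _ fun i hi => hY i n (mem_range.mp hi)
    have hYn : Measurable (Y n) := (hY n (n + 1) n.lt_succ_self).mono (hF _) le_rfl
    have hYn_int : Integrable (Y n) μ :=
      .of_mem_Icc 0 1 hYn.aemeasurable (ae_of_all _ (hY01 n))
    have hgY_int : Integrable (g * Y n) μ :=
      .of_mem_Icc 0 1 ((hgF.mono (hF n) le_rfl).mul hYn).aemeasurable <| ae_of_all _ fun ω =>
        ⟨mul_nonneg (hg01 ω).1 (hY01 n ω).1, mul_le_one₀ (hg01 ω).2 (hY01 n ω).1 (hY01 n ω).2⟩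
    have hg_int : Integrable g μ :=
      .of_mem_Icc 0 1 (hgF.mono (hF n) le_rfl).aemeasurable (ae_of_all _ hg01)
    have hpull := condExp_mul_of_stronglyMeasurable_left hgF.stronglyMeasurable hgY_int hYn_int
    calc ∫ ω, ∏ i ∈ range (n + 1), Y i ω ∂μ
        = ∫ ω, μ[g * Y n | F n] ω ∂μ := by
          simp_rw [integral_condExp (hF n), prod_range_succ]; rfl
      _ = ∫ ω, g ω * μ[Y n | F n] ω ∂μ := integral_congr_ae hpull
      _ ≤ ∫ ω, q * g ω ∂μ := by
          refine integral_mono_ae (integrable_condExp.congr hpull) (hg_int.const_mul q) ?_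
          filter_upwards [hcond n n.lt_succ_self] with ω hω
          rw [mul_comm q]
          exact mul_le_mul_of_nonneg_left hω (hg01 ω).1
      _ = q * ∫ ω, g ω ∂μ := integral_const_mul q g
      _ ≤ q * q ^ n :=
          mul_le_mul_of_nonneg_left (ih fun k hk => hcond k (hk.trans n.lt_succ_self)) hq
      _ = q ^ (n + 1) := (pow_succ' q n).symm

end ProductBound

section BernoulliSum

open Finset Real

variable {Ω : Type*} {m₀ : MeasurableSpace Ω} {μ : Measure Ω} [IsProbabilityMeasure μ]
  {X : ℕ → Ω → ℝ} {p : ℝ} {N : ℕ}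

theorem integral_prod_exp_neg_mul_le_pow (hmeas : ∀ i, Measurable (X i))
    (hBer : ∀ i ω, X i ω = 0 ∨ X i ω = 1) (hp : p ≤ 1)
    (hcond : ∀ k < N, ∀ᵐ ω ∂μ,
      p ≤ μ[X k | ⨆ i : Fin k, MeasurableSpace.comap (X i) Real.measurableSpace] ω)
    {t : ℝ} (ht : 0 ≤ t) :
    ∫ ω, ∏ i ∈ range N, exp (-t * X i ω) ∂μ ≤ (1 + (exp (-t) - 1) * p) ^ N := by
  have hc : exp (-t) - 1 ≤ 0 := sub_nonpos.mpr (exp_le_one_iff.mpr (neg_nonpos.mpr ht))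
  have hq : 0 ≤ 1 + (exp (-t) - 1) * p := by nlinarith [exp_pos (-t)]
  have hX01 i ω : X i ω ∈ Set.Icc (0 : ℝ) 1 := by rcases hBer i ω with h | h <;> simp [h]
  set F : ℕ → MeasurableSpace Ω := fun k => ⨆ i : Fin k, .comap (X i) Real.measurableSpace
  have hF k : F k ≤ m₀ := iSup_le fun i => (hmeas i).comap_le
  have hXF i k (hik : i < k) : Measurable[F k] (X i) :=
    Measurable.of_comap_le (le_iSup (fun j : Fin k => MeasurableSpace.comap (X j) _) ⟨i, hik⟩)
  refine integral_prod_range_le_pow_of_condExp_le hF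
    (fun i k hik => ((hXF i k hik).const_mul _).exp)
    (fun i ω => ⟨(exp_pos _).le, exp_le_one_iff.mpr (by nlinarith [(hX01 i ω).1])⟩) hq
    fun k hk => ?_
  simp_rw [exp_neg_mul_eq_one_add_mul_of_eq_zero_or_eq_one (hBer k _)]
  exact condExp_one_add_mul_le (hF k)
    (.of_mem_Icc 0 1 (hmeas k).aemeasurable (ae_of_all _ (hX01 k))) hc (hcond k hk)

theorem measureReal_sum_le_le_exp (hmeas : ∀ i, Measurable (X i))
    (hBer : ∀ i ω, X i ω = 0 ∨ X i ω = 1) (hp : p ≤ 1)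
    (hcond : ∀ k < N, ∀ᵐ ω ∂μ,
      p ≤ μ[X k | ⨆ i : Fin k, MeasurableSpace.comap (X i) Real.measurableSpace] ω)
    {t : ℝ} (ht : 0 ≤ t) (a : ℝ) :
    μ.real {ω | ∑ i ∈ range N, X i ω ≤ a} ≤ exp (t * a + N * p * (exp (-t) - 1)) := by
  have hexp_sum ω : exp (-t * ∑ i ∈ range N, X i ω) = ∏ i ∈ range N, exp (-t * X i ω) := by
    rw [mul_sum, exp_sum]
  have hint : Integrable (fun ω => exp (-t * ∑ i ∈ range N, X i ω)) μ := by
    refine .of_mem_Icc 0 1 (by fun_prop) (ae_of_all _ fun ω => ⟨(exp_pos _).le, ?_⟩)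
    refine exp_le_one_iff.mpr (mul_nonpos_of_nonpos_of_nonneg (neg_nonpos.mpr ht)
      (sum_nonneg fun i _ => ?_))
    rcases hBer i ω with h | h <;> simp [h]
  have hq : 0 ≤ 1 + (exp (-t) - 1) * p := by
    nlinarith [exp_pos (-t), exp_le_one_iff.mpr (neg_nonpos.mpr ht)]
  calc μ.real {ω | ∑ i ∈ range N, X i ω ≤ a}
      ≤ exp (t * a) * mgf (fun ω => ∑ i ∈ range N, X i ω) μ (-t) := by
        simpa only [neg_neg] using measure_le_le_exp_mul_mgf a (neg_nonpos.mpr ht) hint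
    _ ≤ exp (t * a) * (1 + (exp (-t) - 1) * p) ^ N := by
        simp only [mgf, hexp_sum]
        gcongr
        exact integral_prod_exp_neg_mul_le_pow hmeas hBer hp hcond ht
    _ ≤ exp (t * a) * exp ((exp (-t) - 1) * p) ^ N := by
        gcongr
        linarith [add_one_le_exp ((exp (-t) - 1) * p)]
    _ = exp (t * a + N * p * (exp (-t) - 1)) := by
        rw [← exp_nat_mul, ← exp_add]; ring_nf

end BernoulliSum

theorem azuma_hoeffding_style_small_deviation
    {Ω : Type*} [MeasurableSpace Ω] (μ : Measure Ω) [IsProbabilityMeasure μ]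
    (N : ℕ) (X : ℕ → Ω → ℝ) (p : ℝ) (hp : p ∈ Set.Ioo (0:ℝ) 1)
    (hmeas : ∀ i, Measurable (X i))
    (hBer : ∀ i, ∀ ω, X i ω = 0 ∨ X i ω = 1)
    (hcond : ∀ k < N, ∀ᵐ ω ∂μ,
      p ≤ MeasureTheory.condExp
            (⨆ i : Fin k, MeasurableSpace.comap (X i) Real.measurableSpace) μ (X k) ω)
    (Δ : ℝ) (hΔpos : 0 < Δ) (hΔ : Δ ≤ N * p / 2) :
    (μ {ω | ∑ i ∈ Finset.range N, X i ω ≤ N * p - Δ}).toReal ≤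
      Real.exp (-(Δ ^ 2 / (4 * (N * p - Δ)))) := by
  have hm : 2 * Δ ≤ N * p := by linarith
  -- `t = Δ / (N p)` is the minimiser of the quadratic upper bound on the Chernoff exponent
  calc (μ {ω | ∑ i ∈ Finset.range N, X i ω ≤ N * p - Δ}).toReal
      ≤ Real.exp (Δ / (N * p) * (N * p - Δ) + N * p * (Real.exp (-(Δ / (N * p))) - 1)) :=
        measureReal_sum_le_le_exp hmeas hBer hp.2.le hcond (div_nonneg hΔpos.le (by linarith)) _
    _ ≤ Real.exp (-(Δ ^ 2 / (4 * (N * p - Δ)))) :=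
        Real.exp_le_exp.mpr (chernoff_exponent_le hΔpos hm)
end

section
/- Let $X = \sum_{i=1}^N X_i$ where the $X_i$ are Bernoulli random variables such that for every $k \in [N]$, $\mathbb{E}[X_k \mid X_1,\dots,X_{k-1}] \ge p$ for some $p \in (0,1)$. Let $\mu = Np$. Then for every $\Delta > \mu/2$, $\Pr[X \le \mu - \Delta] \le \exp\left(\frac{-3\Delta + \mu}{4}\right)$. -/
open MeasureTheory ProbabilityTheory

/-! A Chernoff bound for the lower tail. For `t ≤ 0`, a `{0,1}`-valued `x` satisfies
`exp (t x) = 1 + (exp t - 1) x`; pulling the `σ(X₀, …, X_{k-1})`-measurable factor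
`exp (t (X₀ + ⋯ + X_{k-1}))` out of the conditional expectation of `X_k` shows that each step
multiplies the moment generating function by at most `1 + (exp t - 1) p ≤ exp ((exp t - 1) p)`.
Markov's inequality at `t = -log 2` bounds the probability by `2 ^ (N p - Δ) exp (-N p / 2)`,
and `log 2 < 3 / 4` turns this into the stated bound when `N p - Δ ≥ 0`; otherwise the event
is empty. -/

open Real Finset

lemma exp_mul_eq_one_add_mul_of_eq_zero_or_eq_one {x : ℝ} (t : ℝ) (hx : x = 0 ∨ x = 1) :
    exp (t * x) = 1 + (exp t - 1) * x := by
  rcases hx with rfl | rfl <;> simp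

section CondExp

variable {Ω : Type*} {m m₀ : MeasurableSpace Ω} {μ : Measure Ω}

lemma mul_integral_le_integral_mul_of_le_condExp {Y Z : Ω → ℝ} {p : ℝ} (hm : m ≤ m₀)
    [SigmaFinite (μ.trim hm)] (hY : StronglyMeasurable[m] Y) (hY0 : 0 ≤ Y)
    (hYint : Integrable Y μ) (hZ : Integrable Z μ) (hYZ : Integrable (Y * Z) μ)
    (hp : ∀ᵐ ω ∂μ, p ≤ μ[Z | m] ω) :
    p * ∫ ω, Y ω ∂μ ≤ ∫ ω, (Y * Z) ω ∂μ := by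
  have hpull := condExp_mul_of_stronglyMeasurable_left hY hYZ hZ
  calc p * ∫ ω, Y ω ∂μ = ∫ ω, Y ω * p ∂μ := by
        rw [← integral_const_mul]; simp_rw [mul_comm]
    _ ≤ ∫ ω, (Y * μ[Z | m]) ω ∂μ :=
        integral_mono_ae (hYint.mul_const p) (integrable_condExp.congr hpull)
          (by filter_upwards [hp] with ω hω using mul_le_mul_of_nonneg_left hω (hY0 ω))
    _ = ∫ ω, (μ[Y * Z | m]) ω ∂μ := integral_congr_ae hpull.symm
    _ = ∫ ω, (Y * Z) ω ∂μ := integral_condExp hm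

end CondExp

lemma exp_mul_sum_range_le_one {α : Type*} {x : ℕ → α → ℝ} {t : ℝ}
    (hx : ∀ i ω, 0 ≤ x i ω) (ht : t ≤ 0) (k : ℕ) (ω : α) :
    exp (t * ∑ i ∈ range k, x i ω) ≤ 1 :=
  exp_le_one_iff.2 (mul_nonpos_of_nonpos_of_nonneg ht (sum_nonneg fun i _ => hx i ω))

section PastSigmaAlgebra

variable {Ω : Type*} {X : ℕ → Ω → ℝ} {t : ℝ}

abbrev pastSigmaAlgebra (X : ℕ → Ω → ℝ) (k : ℕ) : MeasurableSpace Ω :=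
  ⨆ i : Fin k, MeasurableSpace.comap (X i) Real.measurableSpace

lemma measurable_pastSigmaAlgebra {i k : ℕ} (hik : i < k) :
    Measurable[pastSigmaAlgebra X k] (X i) :=
  fun _ hs => le_iSup (fun j : Fin k => MeasurableSpace.comap (X j) Real.measurableSpace)
    ⟨i, hik⟩ _ ⟨_, hs, rfl⟩

lemma stronglyMeasurable_exp_mul_sum_range (k : ℕ) :
    StronglyMeasurable[pastSigmaAlgebra X k] fun ω => exp (t * ∑ i ∈ range k, X i ω) :=
  (measurable_const.mul (Finset.measurable_sum _ fun _ hi =>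
    measurable_pastSigmaAlgebra (mem_range.1 hi))).exp.stronglyMeasurable

variable [MeasurableSpace Ω] {μ : Measure Ω} {p : ℝ}

lemma pastSigmaAlgebra_le (hX : ∀ i, Measurable (X i)) (k : ℕ) :
    pastSigmaAlgebra X k ≤ ‹MeasurableSpace Ω› :=
  iSup_le fun i => (hX i).comap_le

lemma integrable_exp_mul_sum_range [IsFiniteMeasure μ] (hX : ∀ i, Measurable (X i))
    (hX0 : ∀ i ω, 0 ≤ X i ω) (ht : t ≤ 0) (k : ℕ) :
    Integrable (fun ω => exp (t * ∑ i ∈ range k, X i ω)) μ :=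
  .of_bound
    (measurable_const.mul (Finset.measurable_sum _ fun i _ => hX i)).exp.aestronglyMeasurable 1
    (.of_forall fun ω => by
      rw [norm_of_nonneg (exp_pos _).le]; exact exp_mul_sum_range_le_one hX0 ht k ω)

lemma mgf_sum_range_succ_le [IsFiniteMeasure μ] (hX : ∀ i, Measurable (X i))
    (hBer : ∀ i ω, X i ω = 0 ∨ X i ω = 1) {k : ℕ}
    (hk : ∀ᵐ ω ∂μ, p ≤ μ[X k | pastSigmaAlgebra X k] ω) (ht : t ≤ 0) :
    mgf (fun ω => ∑ i ∈ range (k + 1), X i ω) μ t ≤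
      (1 + (exp t - 1) * p) * mgf (fun ω => ∑ i ∈ range k, X i ω) μ t := by
  have hX0 i ω : 0 ≤ X i ω := by rcases hBer i ω with h | h <;> simp [h]
  have hXk : ∀ᵐ ω ∂μ, ‖X k ω‖ ≤ 1 :=
    .of_forall fun ω => by rcases hBer k ω with h | h <;> simp [h]
  set Y : Ω → ℝ := fun ω => exp (t * ∑ i ∈ range k, X i ω)
  have hYint : Integrable Y μ := integrable_exp_mul_sum_range hX hX0 ht k
  have hXint : Integrable (X k) μ := .of_bound (hX k).aestronglyMeasurable 1 hXk
  have hYXint : Integrable (Y * X k) μ := hYint.mul_bdd hXint.aestronglyMeasurable hXk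
  have hsplit : (fun ω => exp (t * ∑ i ∈ range (k + 1), X i ω)) =
      fun ω => Y ω + (exp t - 1) * (Y * X k) ω := by
    funext ω
    simp only [Y, Pi.mul_apply, sum_range_succ, mul_add, exp_add,
      exp_mul_eq_one_add_mul_of_eq_zero_or_eq_one t (hBer k ω)]
    ring
  have hstep := mul_integral_le_integral_mul_of_le_condExp (pastSigmaAlgebra_le hX k)
    (stronglyMeasurable_exp_mul_sum_range k) (fun ω => (exp_pos _).le) hYint hXint hYXint hk
  have hexp : exp t - 1 ≤ 0 := by linarith [exp_le_one_iff.2 ht]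
  rw [mgf, mgf, hsplit, integral_add hYint (hYXint.const_mul _), integral_const_mul]
  nlinarith

theorem mgf_sum_range_le [IsProbabilityMeasure μ] (hX : ∀ i, Measurable (X i))
    (hBer : ∀ i ω, X i ω = 0 ∨ X i ω = 1) {N : ℕ}
    (hcond : ∀ k < N, ∀ᵐ ω ∂μ, p ≤ μ[X k | pastSigmaAlgebra X k] ω) (ht : t ≤ 0) :
    mgf (fun ω => ∑ i ∈ range N, X i ω) μ t ≤ exp (N * p * (exp t - 1)) := by
  induction N with
  | zero => simp [mgf]
  | succ n ih =>
    calc mgf (fun ω => ∑ i ∈ range (n + 1), X i ω) μ t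
        ≤ (1 + (exp t - 1) * p) * mgf (fun ω => ∑ i ∈ range n, X i ω) μ t :=
          mgf_sum_range_succ_le hX hBer (hcond n n.lt_succ_self) ht
      _ ≤ exp ((exp t - 1) * p) * exp (n * p * (exp t - 1)) := by
          gcongr
          · exact mgf_nonneg
          · linarith [add_one_le_exp ((exp t - 1) * p)]
          · exact ih fun k hk => hcond k (hk.trans n.lt_succ_self)
      _ = exp ((n + 1 : ℕ) * p * (exp t - 1)) := by rw [← exp_add]; push_cast; ring_nf

end PastSigmaAlgebra

theorem azuma_hoeffding_style_large_deviation_general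
    {Ω : Type*} [MeasurableSpace Ω] (μ : Measure Ω) [IsProbabilityMeasure μ]
    (N : ℕ) (X : ℕ → Ω → ℝ) (p : ℝ)
    (hmeas : ∀ i, Measurable (X i))
    (hBer : ∀ i, ∀ ω, X i ω = 0 ∨ X i ω = 1)
    (hcond : ∀ k < N, ∀ᵐ ω ∂μ,
      p ≤ MeasureTheory.condExp
            (⨆ i : Fin k, MeasurableSpace.comap (X i) Real.measurableSpace) μ (X k) ω)
    (Δ : ℝ) :
    (μ {ω | ∑ i ∈ Finset.range N, X i ω ≤ N * p - Δ}).toReal ≤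
      Real.exp ((-3 * Δ + N * p) / 4) := by
  have hX0 i ω : 0 ≤ X i ω := by rcases hBer i ω with h | h <;> simp [h]
  rcases lt_or_ge ((N : ℝ) * p - Δ) 0 with hc | hc
  · have hempty : {ω | ∑ i ∈ range N, X i ω ≤ N * p - Δ} = ∅ :=
      Set.eq_empty_of_forall_notMem fun ω hω =>
        (hc.trans_le (sum_nonneg fun i _ => hX0 i ω)).not_ge hω
    simp [hempty, (exp_pos _).le]
  have ht : -log 2 ≤ 0 := neg_nonpos.2 (log_nonneg one_le_two)
  calc (μ {ω | ∑ i ∈ range N, X i ω ≤ N * p - Δ}).toReal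
      ≤ exp (-(-log 2) * (N * p - Δ)) * mgf (fun ω => ∑ i ∈ range N, X i ω) μ (-log 2) :=
        measure_le_le_exp_mul_mgf _ ht (integrable_exp_mul_sum_range hmeas hX0 ht N)
    _ ≤ exp (log 2 * (N * p - Δ)) * exp (N * p * (exp (-log 2) - 1)) := by
        rw [neg_neg]; gcongr; exact mgf_sum_range_le hmeas hBer hcond ht
    _ ≤ exp ((-3 * Δ + N * p) / 4) := by
        rw [← exp_add, exp_neg, exp_log two_pos]
        gcongr
        nlinarith [log_two_lt_d9]

theorem azuma_hoeffding_style_large_deviation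
    {Ω : Type*} [MeasurableSpace Ω] (μ : Measure Ω) [IsProbabilityMeasure μ]
    (N : ℕ) (X : ℕ → Ω → ℝ) (p : ℝ) (hp : p ∈ Set.Ioo (0:ℝ) 1)
    (hmeas : ∀ i, Measurable (X i))
    (hBer : ∀ i, ∀ ω, X i ω = 0 ∨ X i ω = 1)
    (hcond : ∀ k < N, ∀ᵐ ω ∂μ,
      p ≤ MeasureTheory.condExp
            (⨆ i : Fin k, MeasurableSpace.comap (X i) Real.measurableSpace) μ (X k) ω)
    (Δ : ℝ) (hΔ : N * p / 2 < Δ) :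
    (μ {ω | ∑ i ∈ Finset.range N, X i ω ≤ N * p - Δ}).toReal ≤
      Real.exp ((-3 * Δ + N * p) / 4) :=
  azuma_hoeffding_style_large_deviation_general μ N X p hmeas hBer hcond Δ
end

section
/- Let $X_1,\dots,X_n$ be negatively associated, identically distributed Bernoulli random variables, $S_n = X_1 + \cdots + X_n$, and $\mu = \mathbb{E}[S_n]$. Then for all $0 \le \delta \le 1$, $\Pr[S_n \le (1-\delta)\mu] \le 2\exp(-\delta^2 \mu / 2)$. -/
open MeasureTheory ProbabilityTheory

/-- Negative association (see paper, Definition 3.5). -/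
def NegAssoc {Ω ι : Type*} [MeasurableSpace Ω] (μ : Measure Ω) (X : ι → Ω → ℝ) : Prop :=
  ∀ (I J : Finset ι), Disjoint I J →
    ∀ (f : (I → ℝ) → ℝ) (g : (J → ℝ) → ℝ),
      ((Monotone f ∧ Monotone g) ∨ (Antitone f ∧ Antitone g)) →
      Measurable f → Measurable g →
      ∫ ω, f (fun i => X i ω) * g (fun j => X j ω) ∂μ ≤
        (∫ ω, f (fun i => X i ω) ∂μ) * ∫ ω, g (fun j => X j ω) ∂μ

/-!
Negative association, applied to `v ↦ exp (t v_a)` and `v ↦ exp (t ∑_{j ∈ s} v_j)` (both monotone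
or both antitone, according to the sign of `t`), makes the moment generating function of a sum
submultiplicative, just as independence makes it multiplicative. For a `{0,1}`-valued `X`,
`E exp (t X) = 1 + (eᵗ - 1) E X ≤ exp ((eᵗ - 1) E X)`. Chernoff's bound at `t = -δ` then gives
`P (S ≤ (1 - δ) μ) ≤ exp ((δ (1 - δ) + e^{-δ} - 1) μ)`, and `e^{-δ} ≤ 1 - δ + δ² / 2` turns the
exponent into `-δ² μ / 2`.
-/

open Real

theorem Real.exp_neg_le_one_sub_add_sq_div_two_s8 {x : ℝ} (hx : 0 ≤ x) :
    exp (-x) ≤ 1 - x + x ^ 2 / 2 := by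
  have hmono : Monotone fun y : ℝ => 1 - y + y ^ 2 / 2 - exp (-y) := by
    refine monotone_of_hasDerivAt_nonneg (f' := fun y => -1 + y + exp (-y)) (fun y => ?_)
      fun y => by simp only [Pi.zero_apply]; linarith [one_sub_le_exp_neg y]
    refine ((((hasDerivAt_id y).const_sub 1).add ((hasDerivAt_pow 2 y).div_const 2)).sub
      (hasDerivAt_neg y).exp).congr_deriv ?_
    norm_num
  simpa using hmono hx

theorem Real.monotone_or_antitone_exp_mul (t : ℝ) :
    Monotone (fun x => exp (t * x)) ∨ Antitone (fun x => exp (t * x)) := by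
  rcases le_total 0 t with ht | ht
  · exact .inl fun x y h => exp_le_exp.mpr (mul_le_mul_of_nonneg_left h ht)
  · exact .inr fun x y h => exp_le_exp.mpr (mul_le_mul_of_nonpos_left h ht)

namespace NegAssoc

variable {Ω ι : Type*} [MeasurableSpace Ω] {μ : Measure Ω} {X : ι → Ω → ℝ}

theorem mgf_add_sum_le (hNA : NegAssoc μ X) (t : ℝ) {a : ι} {s : Finset ι} (ha : a ∉ s) :
    mgf (X a + ∑ i ∈ s, X i) μ t ≤ mgf (X a) μ t * mgf (∑ i ∈ s, X i) μ t := by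
  have hsum : Monotone fun v : s → ℝ => ∑ j, v j := fun v w h => Finset.sum_le_sum fun j _ => h j
  have hNA_a := hNA {a} s (Finset.disjoint_singleton_left.mpr ha)
    (fun v => exp (t * v ⟨a, Finset.mem_singleton_self a⟩)) (fun v => exp (t * ∑ j, v j))
    ((monotone_or_antitone_exp_mul t).imp
      (fun he => ⟨he.comp (Function.monotone_eval _), he.comp hsum⟩)
      fun he => ⟨he.comp_monotone (Function.monotone_eval _), he.comp_monotone hsum⟩)
    (by fun_prop) (by fun_prop)
  have hattach (ω : Ω) : ∑ j ∈ s.attach, X j ω = ∑ j ∈ s, X j ω := Finset.sum_attach s (X · ω)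
  simpa [mgf, exp_add, mul_add, hattach] using hNA_a

theorem mgf_sum_le_prod [IsProbabilityMeasure μ] (hNA : NegAssoc μ X) (t : ℝ) (s : Finset ι) :
    mgf (∑ i ∈ s, X i) μ t ≤ ∏ i ∈ s, mgf (X i) μ t := by
  classical
  induction s using Finset.induction_on with
  | empty => simp
  | insert a s ha ih =>
    rw [Finset.sum_insert ha, Finset.prod_insert ha]
    exact (hNA.mgf_add_sum_le t ha).trans (mul_le_mul_of_nonneg_left ih mgf_nonneg)

end NegAssoc

section ZeroOne

variable {Ω : Type*} [MeasurableSpace Ω] {μ : Measure Ω} [IsProbabilityMeasure μ] {X : Ω → ℝ}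

theorem mgf_eq_of_ae_mem_zero_one (hX : AEMeasurable X μ) (h01 : ∀ᵐ ω ∂μ, X ω = 0 ∨ X ω = 1)
    (t : ℝ) : mgf X μ t = 1 + (exp t - 1) * μ[X] := by
  have hint : Integrable X μ := .of_mem_Icc 0 1 hX <| by
    filter_upwards [h01] with ω hω
    rcases hω with h | h <;> simp [h]
  calc mgf X μ t = ∫ ω, 1 + (exp t - 1) * X ω ∂μ := by
        refine integral_congr_ae ?_
        filter_upwards [h01] with ω hω
        rcases hω with h | h <;> simp [h]
    _ = 1 + (exp t - 1) * μ[X] := by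
        rw [integral_add (integrable_const _) (hint.const_mul _), integral_const_mul]
        simp

theorem mgf_le_exp_of_ae_mem_zero_one (hX : AEMeasurable X μ)
    (h01 : ∀ᵐ ω ∂μ, X ω = 0 ∨ X ω = 1) (t : ℝ) : mgf X μ t ≤ exp ((exp t - 1) * μ[X]) := by
  rw [mgf_eq_of_ae_mem_zero_one hX h01 t, add_comm]
  exact add_one_le_exp _

end ZeroOne

theorem chernoff_lower_tail_negAssoc_general {Ω : Type*} [MeasurableSpace Ω] (μ : Measure Ω)
    [IsProbabilityMeasure μ] (n : ℕ) (X : Fin n → Ω → ℝ)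
    (hmeas : ∀ i, Measurable (X i))
    (hBer : ∀ i, ∀ ω, X i ω = 0 ∨ X i ω = 1)
    (hNA : NegAssoc μ X)
    (δ : ℝ) (hδ0 : 0 ≤ δ) :
    (μ {ω | ∑ i, X i ω ≤ (1 - δ) * (∫ ω', ∑ i, X i ω' ∂μ)}).toReal ≤
      2 * Real.exp (-δ ^ 2 * (∫ ω', ∑ i, X i ω' ∂μ) / 2) := by
  set m := ∫ ω', ∑ i, X i ω' ∂μ
  have hX01 (i : Fin n) (ω : Ω) : X i ω ∈ Set.Icc 0 1 := by
    rcases hBer i ω with h | h <;> simp [h]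
  have hS (ω : Ω) : (∑ i, X i) ω ∈ Set.Icc 0 (n : ℝ) := by
    rw [Finset.sum_apply]
    constructor
    · exact Finset.sum_nonneg fun i _ => (hX01 i ω).1
    · simpa using Finset.sum_le_sum fun i (_ : i ∈ Finset.univ) => (hX01 i ω).2
  have hm : m = ∑ i, μ[X i] :=
    integral_finsetSum _ fun i _ => .of_mem_Icc 0 1 (hmeas i).aemeasurable (ae_of_all _ (hX01 i))
  have hm0 : 0 ≤ m := integral_nonneg fun ω => (hS ω).1.trans_eq (Finset.sum_apply ..)
  have hmgf : mgf (∑ i, X i) μ (-δ) ≤ exp ((exp (-δ) - 1) * m) := calc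
    mgf (∑ i, X i) μ (-δ) ≤ ∏ i, mgf (X i) μ (-δ) := hNA.mgf_sum_le_prod _ _
    _ ≤ ∏ i, exp ((exp (-δ) - 1) * μ[X i]) :=
        Finset.prod_le_prod (fun _ _ => mgf_nonneg) fun i _ =>
          mgf_le_exp_of_ae_mem_zero_one (hmeas i).aemeasurable (ae_of_all _ (hBer i)) _
    _ = exp ((exp (-δ) - 1) * m) := by rw [← exp_sum, ← Finset.mul_sum, hm]
  have hchernoff := measure_le_le_exp_mul_mgf (μ := μ) ((1 - δ) * m) (neg_nonpos.mpr hδ0)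
    (integrable_exp_mul_of_mem_Icc (Finset.aemeasurable_sum _ fun i _ => (hmeas i).aemeasurable)
      (ae_of_all _ hS))
  calc (μ {ω | ∑ i, X i ω ≤ (1 - δ) * m}).toReal
      ≤ exp (δ * ((1 - δ) * m)) * mgf (∑ i, X i) μ (-δ) := by
        simpa [Finset.sum_apply, measureReal_def] using hchernoff
    _ ≤ exp (δ * ((1 - δ) * m)) * exp ((exp (-δ) - 1) * m) := by gcongr
    _ ≤ exp (-δ ^ 2 * m / 2) := by
        rw [← exp_add]
        gcongr
        nlinarith [exp_neg_le_one_sub_add_sq_div_two_s8 hδ0]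
    _ ≤ 2 * exp (-δ ^ 2 * m / 2) := by linarith [exp_pos (-δ ^ 2 * m / 2)]

/-- Multiplicative Chernoff lower-tail bound for negatively associated, identically
distributed Bernoulli random variables. -/
theorem chernoff_lower_tail_negAssoc {Ω : Type*} [MeasurableSpace Ω] (μ : Measure Ω)
    [IsProbabilityMeasure μ] (n : ℕ) (X : Fin n → Ω → ℝ)
    (hmeas : ∀ i, Measurable (X i))
    (hBer : ∀ i, ∀ ω, X i ω = 0 ∨ X i ω = 1)
    (hid : ∀ i j, IdentDistrib (X i) (X j) μ μ)
    (hNA : NegAssoc μ X)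
    (δ : ℝ) (hδ0 : 0 ≤ δ) (hδ1 : δ ≤ 1) :
    (μ {ω | ∑ i, X i ω ≤ (1 - δ) * (∫ ω', ∑ i, X i ω' ∂μ)}).toReal ≤
      2 * Real.exp (-δ ^ 2 * (∫ ω', ∑ i, X i ω' ∂μ) / 2) :=
  chernoff_lower_tail_negAssoc_general μ n X hmeas hBer hNA δ hδ0
end

section
/- Consider a stream of $n$ items with frequency vector $(f_x)_x$ of non-negative integers summing to $n$. Partition time into dyadic intervals: for each level $l \ge 0$, the stream's windows are grouped into disjoint intervals $I$ each consisting of $2^l$ consecutive windows, and let $f_{x,I}$ be the frequency of $x$ within interval $I$. Define $\alpha_I$ to be the number of elements $x$ with $f_{x,I} \ge 2^{l-1}$ (for $I$ in level $l$). If $\sum_x f_x^2 \le (1+2^{-8}) C^2 n$, then $\sum_{l \ge 0} \sum_{I \text{ in level } l} \alpha_I \cdot 4^l \le (8 + 2^{-5}) C^2 n$. -/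
/-!
Fix an element with total frequency `f`. The intervals of one level are disjoint, so at most
`f / 2^(l-1)` of them carry frequency `≥ 2^(l-1)`, and none do once `2^(l-1) > f`. Level `l`
therefore contributes at most `2f · 2^l`, and the geometric series over the levels with
`2^(l-1) ≤ f` sums to at most `4f`, giving `8 f²` per element. Summing over elements, the
second-moment hypothesis yields the bound since `8 (1 + 2⁻⁸) = 8 + 2⁻⁵`.
-/
open Finset

theorem pairwiseDisjoint_Ico_mul (d : ℕ) (s : Set ℕ) :
    s.PairwiseDisjoint fun m => Ico (m * d) ((m + 1) * d) := by
  intro m _ m' _ hne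
  refine disjoint_left.2 fun w hw hw' => hne ?_
  rw [mem_Ico] at hw hw'
  exact (Nat.div_eq_of_lt_le hw.1 hw.2).symm.trans (Nat.div_eq_of_lt_le hw'.1 hw'.2)

theorem sum_sum_Ico_mul_inter_range_le (h : ℕ → ℕ) (T d M : ℕ) :
    ∑ m ∈ range M, ∑ w ∈ Ico (m * d) ((m + 1) * d) ∩ range T, h w ≤ ∑ w ∈ range T, h w := by
  rw [← sum_biUnion]
  · exact sum_le_sum_of_subset fun w hw => by
      obtain ⟨m, -, hw⟩ := mem_biUnion.1 hw
      exact (mem_inter.1 hw).2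
  · exact (pairwiseDisjoint_Ico_mul d _).mono fun m => inter_subset_left

theorem card_filter_le_mul_le_sum {ι : Type*} (s : Finset ι) (F : ι → ℕ) (t : ℕ) :
    #{i ∈ s | t ≤ F i} * t ≤ ∑ i ∈ s, F i :=
  calc #{i ∈ s | t ≤ F i} * t ≤ ∑ i ∈ s with t ≤ F i, F i := by
        simpa using card_nsmul_le_sum _ F t fun i hi => (mem_filter.1 hi).2
    _ ≤ ∑ i ∈ s, F i := sum_le_sum_of_subset (filter_subset _ s)

theorem sum_two_pow_filter_two_pow_pred_le (f N : ℕ) :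
    ∑ l ∈ range N with 2 ^ (l - 1) ≤ f, 2 ^ l ≤ 4 * f := by
  rcases eq_or_ne f 0 with rfl | hf
  · simp
  calc ∑ l ∈ range N with 2 ^ (l - 1) ≤ f, 2 ^ l ≤ 2 ^ (Nat.log 2 f + 2) :=
        (Nat.geomSum_lt le_rfl fun l hl => by
          have := Nat.le_log_of_pow_le one_lt_two (mem_filter.1 hl).2
          omega).le
    _ = 4 * 2 ^ Nat.log 2 f := by ring
    _ ≤ 4 * f := Nat.mul_le_mul_left 4 (Nat.pow_log_le_self 2 hf)

theorem sum_card_heavy_dyadic_le (h : ℕ → ℕ) (T L M : ℕ) :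
    ∑ l ∈ range L,
        #{m ∈ range M | 2 ^ (l - 1) ≤ ∑ w ∈ Ico (m * 2 ^ l) ((m + 1) * 2 ^ l) ∩ range T, h w} *
          4 ^ l
      ≤ 8 * (∑ w ∈ range T, h w) ^ 2 := by
  set f := ∑ w ∈ range T, h w
  set c := fun l =>
    #{m ∈ range M | 2 ^ (l - 1) ≤ ∑ w ∈ Ico (m * 2 ^ l) ((m + 1) * 2 ^ l) ∩ range T, h w}
  have level (l : ℕ) : c l * 2 ^ (l - 1) ≤ f :=
    (card_filter_le_mul_le_sum _ _ _).trans (sum_sum_Ico_mul_inter_range_le h T _ M)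
  calc ∑ l ∈ range L, c l * 4 ^ l ≤ ∑ l ∈ range L with 2 ^ (l - 1) ≤ f, 2 * f * 2 ^ l := by
        rw [sum_filter]
        refine sum_le_sum fun l _ => ?_
        split_ifs with hl
        · have : 4 ^ l ≤ 2 ^ (l - 1) * 2 ^ (l + 1) := by
            rw [← pow_add, show 4 = 2 ^ 2 from rfl, ← pow_mul]
            exact Nat.pow_le_pow_right two_pos (by omega)
          calc c l * 4 ^ l ≤ c l * 2 ^ (l - 1) * 2 ^ (l + 1) := by rw [mul_assoc]; gcongr
            _ ≤ f * 2 ^ (l + 1) := by gcongr; exact level l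
            _ = 2 * f * 2 ^ l := by ring
        · have : c l = 0 := by
            by_contra hc
            exact hl ((Nat.le_mul_of_pos_left _ (Nat.pos_of_ne_zero hc)).trans (level l))
          simp [this]
    _ = 2 * f * ∑ l ∈ range L with 2 ^ (l - 1) ≤ f, 2 ^ l := (mul_sum _ _ _).symm
    _ ≤ 2 * f * (4 * f) := by gcongr; exact sum_two_pow_filter_two_pow_pred_le f L
    _ = 8 * f ^ 2 := by ring

/-- `g x w` counts the occurrences of `x` in window `w`; the level-`l` interval with index `m`
consists of the windows `m·2^l, …, (m+1)·2^l - 1` below `T`. -/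
theorem dyadic_heavy_count_bound_general {α : Type*} [Fintype α]
    (n T : ℕ) (C : ℝ) (g : α → ℕ → ℕ) (f : α → ℕ)
    (hf : ∀ x, f x = ∑ w ∈ Finset.range T, g x w)
    (h2 : (∑ x, (f x : ℝ) ^ 2) ≤ (1 + (2:ℝ) ^ (-8 : ℤ)) * C ^ 2 * n) :
    ∑ l ∈ Finset.range (T + 1), ∑ m ∈ Finset.range (T + 1),
        ((Finset.univ.filter (fun x =>
            2 ^ (l - 1) ≤ ∑ w ∈ Finset.Ico (m * 2 ^ l) ((m + 1) * 2 ^ l) ∩ Finset.range T,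
              g x w)).card : ℝ) * 4 ^ l
      ≤ (8 + (2:ℝ) ^ (-5 : ℤ)) * C ^ 2 * n := by
  set heavy := fun x l m =>
    2 ^ (l - 1) ≤ ∑ w ∈ Ico (m * 2 ^ l) ((m + 1) * 2 ^ l) ∩ range T, g x w
  have double_count (l : ℕ) :
      ∑ m ∈ range (T + 1), (#{x | heavy x l m} : ℝ) =
        ∑ x, (#{m ∈ range (T + 1) | heavy x l m} : ℝ) := by
    exact_mod_cast sum_card_bipartiteAbove_eq_sum_card_bipartiteBelow (fun m x => heavy x l m)
  have per_element (x : α) :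
      ∑ l ∈ range (T + 1), (#{m ∈ range (T + 1) | heavy x l m} : ℝ) * 4 ^ l ≤
        8 * (f x : ℝ) ^ 2 := by
    rw [hf x]
    exact_mod_cast sum_card_heavy_dyadic_le (g x) T (T + 1) (T + 1)
  calc ∑ l ∈ range (T + 1), ∑ m ∈ range (T + 1), (#{x | heavy x l m} : ℝ) * 4 ^ l
      = ∑ x, ∑ l ∈ range (T + 1), (#{m ∈ range (T + 1) | heavy x l m} : ℝ) * 4 ^ l := by
        simp_rw [← sum_mul, double_count, sum_mul]
        exact sum_comm
    _ ≤ ∑ x, 8 * (f x : ℝ) ^ 2 := sum_le_sum fun x _ => per_element x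
    _ ≤ 8 * ((1 + (2:ℝ) ^ (-8 : ℤ)) * C ^ 2 * n) := by rw [← mul_sum]; gcongr
    _ = (8 + (2:ℝ) ^ (-5 : ℤ)) * C ^ 2 * n := by norm_num; ring

/-- Claim 5.2 of the paper: the number of "locally heavy" elements in the dyadic
hierarchy of intervals, weighted by `4^l`, is bounded via the second moment.
Here `T` is the number of windows, `g x w` is the number of occurrences of element
`x` in window `w`, and the level-`l` interval indexed by `m` consists of windows
`m·2^l, …, (m+1)·2^l - 1`. The count `α_I` of elements with frequency at least
`2^(l-1)` in the interval appears as the cardinality of a filter. -/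
theorem dyadic_heavy_count_bound {α : Type*} [Fintype α] [DecidableEq α]
    (n T : ℕ) (C : ℝ) (g : α → ℕ → ℕ) (f : α → ℕ)
    (hf : ∀ x, f x = ∑ w ∈ Finset.range T, g x w)
    (hn : ∑ x, f x = n)
    (h2 : (∑ x, (f x : ℝ) ^ 2) ≤ (1 + (2:ℝ) ^ (-8 : ℤ)) * C ^ 2 * n) :
    ∑ l ∈ Finset.range (T + 1), ∑ m ∈ Finset.range (T + 1),
        ((Finset.univ.filter (fun x =>
            2 ^ (l - 1) ≤ ∑ w ∈ Finset.Ico (m * 2 ^ l) ((m + 1) * 2 ^ l) ∩ Finset.range T,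
              g x w)).card : ℝ) * 4 ^ l
      ≤ (8 + (2:ℝ) ^ (-5 : ℤ)) * C ^ 2 * n :=
  dyadic_heavy_count_bound_general n T C g f hf h2
end

section
/- Let $(f_x)_x$ be non-negative integers with $\sum_x f_x = n$ and $\sum_x f_x^2 \ge n$. Let $F_2 = \sum_x f_x^2$ and $F_3 = \sum_x f_x^3$. Then $F_3 \le 2 F_2^2 / \sqrt{n}$. -/
lemma cube_le_aux (a s : ℝ) (ha : 0 ≤ a) (hs : 0 < s) :
    a ^ 3 ≤ s * a ^ 2 + a ^ 4 / s := by
  rcases le_total a s with h | h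
  · have h1 : a ^ 3 ≤ s * a ^ 2 := by nlinarith
    have h2 : 0 ≤ a ^ 4 / s := by positivity
    linarith
  · have h1 : a ^ 3 ≤ a ^ 4 / s := by
      rw [le_div_iff₀ hs]; nlinarith [mul_le_mul_of_nonneg_left h (pow_nonneg ha 3)]
    have h2 : 0 ≤ s * a ^ 2 := by positivity
    linarith

/-- If the frequencies `f x` sum to `n` and have second moment `F₂ ≥ n`, then the
third moment `F₃` satisfies `F₃ ≤ 2 F₂² / √n`. -/
theorem third_moment_le {α : Type*} [Fintype α] (n : ℕ) (f : α → ℕ)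
    (hsum : ∑ x, f x = n) (hF2 : (n : ℝ) ≤ ∑ x, (f x : ℝ) ^ 2) :
    (∑ x, (f x : ℝ) ^ 3) ≤ 2 * (∑ x, (f x : ℝ) ^ 2) ^ 2 / Real.sqrt n := by
  rcases Nat.eq_zero_or_pos n with hn | hn
  · subst hn
    have hz : ∀ x, f x = 0 := by
      intro x
      have := Finset.sum_eq_zero_iff.mp hsum
      exact this x (Finset.mem_univ x)
    simp [hz]
  · set s := Real.sqrt n with hs
    have hspos : 0 < s := Real.sqrt_pos.mpr (by exact_mod_cast hn)
    have hss : s * s = n := Real.mul_self_sqrt (by positivity)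
    set F2 := ∑ x, (f x : ℝ) ^ 2 with hF2def
    have hF2nonneg : 0 ≤ F2 := Finset.sum_nonneg fun x _ => by positivity
    have step1 : (∑ x, (f x : ℝ) ^ 3) ≤ s * F2 + (∑ x, (f x : ℝ) ^ 4) / s := by
      rw [Finset.mul_sum, Finset.sum_div, ← Finset.sum_add_distrib]
      exact Finset.sum_le_sum fun x _ => cube_le_aux _ s (by positivity) hspos
    have step2 : (∑ x, (f x : ℝ) ^ 4) ≤ F2 ^ 2 := by
      have : (∑ x, (f x : ℝ) ^ 4) = ∑ x, ((f x : ℝ) ^ 2) ^ 2 := by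
        apply Finset.sum_congr rfl; intro x _; ring
      rw [this, hF2def]
      exact Finset.sum_sq_le_sq_sum_of_nonneg fun x _ => by positivity
    have step3 : s * F2 ≤ F2 ^ 2 / s := by
      rw [le_div_iff₀ hspos]
      have : s * F2 * s = (n : ℝ) * F2 := by rw [← hss]; ring
      rw [this]
      nlinarith
    have : (∑ x, (f x : ℝ) ^ 3) ≤ F2 ^ 2 / s + F2 ^ 2 / s := by
      have h4 : (∑ x, (f x : ℝ) ^ 4) / s ≤ F2 ^ 2 / s := by gcongr
      linarith
    have heq : 2 * F2 ^ 2 / s = F2 ^ 2 / s + F2 ^ 2 / s := by ring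
    linarith [this]
end

section
/- Let a multiset $S$ of $n$ items with frequencies $(f_x)$ be arranged in uniformly random order, and let $Y_x^{(t)}$ be the squared number of occurrences of $x$ among the first $t$ positions. Then $\mathrm{var}(Y_x^{(t)}) \le 3 f_x^3$ for every $x$ and every $t \le n$. -/
/-!
Let `X` be the number of occurrences of `x` among the first `t` positions, so `Y = X²` and
`0 ≤ X ≤ f`. With `μ = 𝔼 X`, `(X² - μ²)² = (X - μ)² (X + μ)² ≤ 4 f² (X - μ)²`, hence
`var (X²) ≤ 4 f² var X`. The count `X` is hypergeometric: a sum of `f` indicators, each of mean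
`p = t / n`, whose pairwise products have mean `t (t - 1) / (n (n - 1)) ≤ p²`; both means are
forced by invariance of the uniform permutation under right multiplication by transpositions.
So `var X ≤ f p (1 - p) ≤ f / 4` and `var (X²) ≤ f³`.
-/

open Finset Equiv
open scoped BigOperators

section UniformVariance

variable {ι : Type*} [Fintype ι]

noncomputable def uniformVariance (g : ι → ℝ) : ℝ := 𝔼 i, g i ^ 2 - (𝔼 i, g i) ^ 2

lemma expect_sub_sq_eq_uniformVariance_add [Nonempty ι] (g : ι → ℝ) (a : ℝ) :
    𝔼 i, (g i - a) ^ 2 = uniformVariance g + (𝔼 i, g i - a) ^ 2 := by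
  have hexpand : ∀ i, (g i - a) ^ 2 = g i ^ 2 - 2 * a * g i + a ^ 2 := fun i => by ring
  simp only [hexpand, uniformVariance, expect_add_distrib, expect_sub_distrib, ← mul_expect,
    Fintype.expect_const]
  ring

lemma uniformVariance_le_expect_sub_sq [Nonempty ι] (g : ι → ℝ) (a : ℝ) :
    uniformVariance g ≤ 𝔼 i, (g i - a) ^ 2 := by
  rw [expect_sub_sq_eq_uniformVariance_add]
  exact le_add_of_nonneg_right (sq_nonneg _)

lemma uniformVariance_sq_le [Nonempty ι] {g : ι → ℝ} {M : ℝ} (hg₀ : ∀ i, 0 ≤ g i)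
    (hgM : ∀ i, g i ≤ M) :
    uniformVariance (fun i => g i ^ 2) ≤ 4 * M ^ 2 * uniformVariance g := by
  set μ := 𝔼 i, g i
  have hμ₀ : 0 ≤ μ := expect_nonneg fun i _ => hg₀ i
  have hμM : μ ≤ M := expect_le univ_nonempty fun i _ => hgM i
  have hpoint : ∀ i, (g i ^ 2 - μ ^ 2) ^ 2 ≤ 4 * M ^ 2 * (g i - μ) ^ 2 := fun i => by
    have hsum : (g i + μ) ^ 2 ≤ (2 * M) ^ 2 := by
      gcongr
      · linarith [hg₀ i]
      · linarith [hgM i]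
    calc (g i ^ 2 - μ ^ 2) ^ 2 = (g i + μ) ^ 2 * (g i - μ) ^ 2 := by ring
      _ ≤ (2 * M) ^ 2 * (g i - μ) ^ 2 := by gcongr
      _ = 4 * M ^ 2 * (g i - μ) ^ 2 := by ring
  calc uniformVariance (fun i => g i ^ 2) ≤ 𝔼 i, (g i ^ 2 - μ ^ 2) ^ 2 :=
        uniformVariance_le_expect_sub_sq _ _
    _ ≤ 𝔼 i, 4 * M ^ 2 * (g i - μ) ^ 2 := expect_le_expect fun i _ => hpoint i
    _ = 4 * M ^ 2 * uniformVariance g := by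
      rw [← mul_expect, expect_sub_sq_eq_uniformVariance_add, sub_self]
      ring

end UniformVariance

section Perm

variable {β : Type*} [Fintype β] [DecidableEq β]

lemma sum_perm_apply_mem_boole (π : Perm β) (T : Finset β) :
    ∑ j, (if π j ∈ T then 1 else 0 : ℝ) = #T := by
  rw [Equiv.sum_comp π (fun k => if k ∈ T then (1 : ℝ) else 0), sum_boole, filter_mem_eq_inter,
    univ_inter]

lemma expect_perm_apply_mem_boole (T : Finset β) (i : β) :
    𝔼 π : Perm β, (if π i ∈ T then 1 else 0 : ℝ) = #T / Fintype.card β := by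
  have hsymm : ∀ j, 𝔼 π : Perm β, (if π j ∈ T then 1 else 0 : ℝ)
      = 𝔼 π : Perm β, (if π i ∈ T then 1 else 0 : ℝ) := fun j =>
    Fintype.expect_equiv (Equiv.mulRight (swap i j)) _ _ fun π => by
      rw [coe_mulRight, Perm.mul_apply, swap_apply_left]
  have hβ : (Fintype.card β : ℝ) ≠ 0 := by
    have : Nonempty β := ⟨i⟩
    exact_mod_cast Fintype.card_ne_zero
  rw [eq_div_iff hβ, mul_comm, ← nsmul_eq_mul, ← card_univ, ← sum_const,
    ← sum_congr rfl fun j _ => hsymm j, ← expect_sum_comm]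
  simp_rw [sum_perm_apply_mem_boole, Fintype.expect_const]

lemma expect_perm_apply_mem_and_boole (T : Finset β) {i j : β} (hij : i ≠ j) :
    𝔼 π : Perm β, (if π i ∈ T ∧ π j ∈ T then 1 else 0 : ℝ)
      = #T * (#T - 1) / (Fintype.card β * (Fintype.card β - 1)) := by
  have hsymm : ∀ k ∈ univ.erase i, 𝔼 π : Perm β, (if π i ∈ T ∧ π k ∈ T then 1 else 0 : ℝ)
      = 𝔼 π : Perm β, (if π i ∈ T ∧ π j ∈ T then 1 else 0 : ℝ) := fun k hk =>
    Fintype.expect_equiv (Equiv.mulRight (swap j k)) _ _ fun π => by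
      rw [coe_mulRight, Perm.mul_apply, Perm.mul_apply, swap_apply_left,
        swap_apply_of_ne_of_ne hij (ne_of_mem_erase hk).symm]
  have hcount : ∀ π : Perm β, ∑ k ∈ univ.erase i, (if π i ∈ T ∧ π k ∈ T then 1 else 0 : ℝ)
      = (if π i ∈ T then 1 else 0) * (#T - 1) := fun π => by
    by_cases hi : π i ∈ T
    · simp only [hi, true_and, if_true, one_mul]
      rw [sum_erase_eq_sub (mem_univ i), sum_perm_apply_mem_boole, if_pos hi]
    · simp [hi]
  have hβ : (1 : ℝ) < Fintype.card β := by
    have : Nontrivial β := ⟨⟨i, j, hij⟩⟩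
    exact_mod_cast Fintype.one_lt_card
  have hpair : (Fintype.card β - 1 : ℝ) * 𝔼 π : Perm β, (if π i ∈ T ∧ π j ∈ T then 1 else 0 : ℝ)
      = #T / Fintype.card β * (#T - 1) :=
    calc (Fintype.card β - 1 : ℝ) * 𝔼 π : Perm β, (if π i ∈ T ∧ π j ∈ T then 1 else 0 : ℝ)
        = ∑ k ∈ univ.erase i, 𝔼 π : Perm β, (if π i ∈ T ∧ π k ∈ T then 1 else 0 : ℝ) := by
          rw [sum_congr rfl hsymm, sum_const, card_erase_of_mem (mem_univ i), card_univ,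
            nsmul_eq_mul, Nat.cast_pred (Fintype.card_pos_iff.mpr ⟨i⟩)]
      _ = 𝔼 π : Perm β, (if π i ∈ T then 1 else 0) * (#T - 1 : ℝ) := by
          rw [← expect_sum_comm]
          simp_rw [hcount]
      _ = #T / Fintype.card β * (#T - 1) := by rw [← expect_mul, expect_perm_apply_mem_boole]
  rw [div_mul_eq_mul_div, eq_div_iff (by linarith)] at hpair
  rw [eq_div_iff (by nlinarith)]
  linear_combination hpair

lemma expect_perm_apply_mem_and_boole_le_sq (T : Finset β) {i j : β} (hij : i ≠ j) :
    𝔼 π : Perm β, (if π i ∈ T ∧ π j ∈ T then 1 else 0 : ℝ) ≤ (#T / Fintype.card β) ^ 2 := by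
  have hβ : (1 : ℝ) < Fintype.card β := by
    have : Nontrivial β := ⟨⟨i, j, hij⟩⟩
    exact_mod_cast Fintype.one_lt_card
  have hT : (#T : ℝ) ≤ Fintype.card β := by exact_mod_cast card_le_univ T
  rw [expect_perm_apply_mem_and_boole T hij, div_pow,
    div_le_div_iff₀ (by nlinarith) (by positivity)]
  have hT₀ : (0 : ℝ) ≤ #T := by positivity
  nlinarith [mul_nonneg hT₀ (sub_nonneg.mpr hT)]

lemma expect_card_filter_perm_mem (S T : Finset β) :
    𝔼 π : Perm β, (#{i ∈ S | π i ∈ T} : ℝ) = #S * (#T / Fintype.card β) := by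
  simp_rw [natCast_card_filter]
  rw [expect_sum_comm]
  simp [expect_perm_apply_mem_boole]

lemma expect_sq_card_filter_perm_mem_le (S T : Finset β) :
    𝔼 π : Perm β, (#{i ∈ S | π i ∈ T} : ℝ) ^ 2
      ≤ #S ^ 2 * (#T / Fintype.card β) ^ 2
        + #S * (#T / Fintype.card β - (#T / Fintype.card β) ^ 2) := by
  set p : ℝ := #T / Fintype.card β
  have hXsq : ∀ π : Perm β, (#{i ∈ S | π i ∈ T} : ℝ) ^ 2
      = ∑ i ∈ S, ∑ j ∈ S, if π i ∈ T ∧ π j ∈ T then 1 else 0 := fun π => by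
    simp only [natCast_card_filter, sq, sum_mul_sum, ite_zero_mul_ite_zero, one_mul]
  have hpair : ∀ i j, 𝔼 π : Perm β, (if π i ∈ T ∧ π j ∈ T then 1 else 0 : ℝ)
      ≤ p ^ 2 + if i = j then p - p ^ 2 else 0 := fun i j => by
    by_cases hij : i = j
    · subst hij
      simp only [and_self, if_true, expect_perm_apply_mem_boole]
      linarith
    · simp only [hij, if_false, add_zero]
      exact expect_perm_apply_mem_and_boole_le_sq T hij
  calc 𝔼 π : Perm β, (#{i ∈ S | π i ∈ T} : ℝ) ^ 2
      = ∑ i ∈ S, ∑ j ∈ S, 𝔼 π : Perm β, (if π i ∈ T ∧ π j ∈ T then 1 else 0 : ℝ) := by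
        simp_rw [hXsq, expect_sum_comm]
    _ ≤ ∑ i ∈ S, ∑ j ∈ S, (p ^ 2 + if i = j then p - p ^ 2 else 0) := by
        gcongr with i _ j _
        exact hpair i j
    _ = #S ^ 2 * p ^ 2 + #S * (p - p ^ 2) := by
        simp only [sum_add_distrib, sum_const, sum_ite_eq, sum_ite_mem, inter_self, nsmul_eq_mul]
        ring

lemma uniformVariance_card_filter_perm_mem_le (S T : Finset β) :
    uniformVariance (fun π : Perm β => (#{i ∈ S | π i ∈ T} : ℝ)) ≤ #S / 4 := by
  set p : ℝ := #T / Fintype.card β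
  have hp : p - p ^ 2 ≤ 1 / 4 := by nlinarith [sq_nonneg (p - 1 / 2)]
  have hsecond := expect_sq_card_filter_perm_mem_le S T
  rw [uniformVariance, expect_card_filter_perm_mem]
  nlinarith [mul_le_mul_of_nonneg_left hp (Nat.cast_nonneg (α := ℝ) #S)]

end Perm

/-- Occurrence `i : Fin n` carries the element `c i` and is put at position `π i`; averaging over
the uniformly random `π` is summing over `Equiv.Perm (Fin n)` and dividing by `n!`. -/
theorem variance_prefix_count_sq_general {α : Type*} [DecidableEq α]
    (n t : ℕ) (c : Fin n → α) (f : α → ℕ)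
    (hf : ∀ x, f x = (Finset.univ.filter (fun i => c i = x)).card) (x : α) :
    (∑ π : Equiv.Perm (Fin n),
        (((Finset.univ.filter (fun i => c i = x ∧ (π i : ℕ) < t)).card : ℝ) ^ 2) ^ 2)
        / (Nat.factorial n : ℝ)
      - ((∑ π : Equiv.Perm (Fin n),
            ((Finset.univ.filter (fun i => c i = x ∧ (π i : ℕ) < t)).card : ℝ) ^ 2)
          / (Nat.factorial n : ℝ)) ^ 2
      ≤ 3 * (f x : ℝ) ^ 3 := by
  set S : Finset (Fin n) := {i | c i = x}
  set T : Finset (Fin n) := {k | (k : ℕ) < t}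
  set X : Perm (Fin n) → ℝ := fun π => #{i ∈ S | π i ∈ T}
  have hX : ∀ π : Perm (Fin n), (#{i | c i = x ∧ (π i : ℕ) < t} : ℝ) = X π := fun π => by
    simp only [X, S, T, filter_filter, mem_filter, mem_univ, true_and]
  have hXf : ∀ π, X π ≤ f x := fun π => by
    rw [hf x]
    exact Nat.cast_le.mpr (card_filter_le S _)
  have hcard : (n.factorial : ℝ) = Fintype.card (Perm (Fin n)) := by
    rw [Fintype.card_perm, Fintype.card_fin]
  simp only [hX, hcard, ← Fintype.expect_eq_sum_div_card]
  change uniformVariance (fun π => X π ^ 2) ≤ _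
  calc uniformVariance (fun π => X π ^ 2) ≤ 4 * (f x) ^ 2 * uniformVariance X :=
        uniformVariance_sq_le (fun _ => by positivity) hXf
    _ ≤ 4 * (f x) ^ 2 * (f x / 4) := by
        gcongr
        rw [hf x]
        exact uniformVariance_card_filter_perm_mem_le S T
    _ ≤ 3 * (f x : ℝ) ^ 3 := by nlinarith [pow_nonneg (Nat.cast_nonneg (α := ℝ) (f x)) 3]

/-- Variance bound for the squared prefix-count of a single element in a uniformly
random order stream: `var(Y_x^{(t)}) ≤ 3 f_x³`. The `n` occurrences are indexed by
`Fin n`, `c i` is the element of occurrence `i`, `f x` its frequency, and a uniformly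
random permutation assigns positions; `Y_x^{(t)}(π)` is the squared number of
occurrences of `x` among the first `t` positions. -/
theorem variance_prefix_count_sq {α : Type*} [Fintype α] [DecidableEq α]
    (n t : ℕ) (ht : t ≤ n) (c : Fin n → α) (f : α → ℕ)
    (hf : ∀ x, f x = (Finset.univ.filter (fun i => c i = x)).card) (x : α) :
    (∑ π : Equiv.Perm (Fin n),
        (((Finset.univ.filter (fun i => c i = x ∧ (π i : ℕ) < t)).card : ℝ) ^ 2) ^ 2)
        / (Nat.factorial n : ℝ)
      - ((∑ π : Equiv.Perm (Fin n),
            ((Finset.univ.filter (fun i => c i = x ∧ (π i : ℕ) < t)).card : ℝ) ^ 2)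
          / (Nat.factorial n : ℝ)) ^ 2
      ≤ 3 * (f x : ℝ) ^ 3 :=
  variance_prefix_count_sq_general n t c f hf x
end

section
/- Let a multiset $S$ of $n$ items with frequencies $(f_x)$, satisfying $\sum_x f_x^2 \ge n$, be arranged in uniformly random order, and let $F_2^{(t)}$ be the second moment of the frequency vector of the first $t$ items. Then $\Pr[|F_2^{(t)} - \mathbb{E}[F_2^{(t)}]| > 0.01 F_2] \le O(1/\sqrt{n})$, where $F_2 = \sum_x f_x^2$. -/
/-!
Write `F₂^{(t)}(π)` as the number of ordered same-colour pairs `(i, j)` whose positions both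
land in the prefix. A fixed `m`-set of positions lands in a fixed `t`-set of positions with
probability `C(t, m) / C(n, m)`, which is submultiplicative over disjoint sets; so indicators
of disjoint pairs are negatively correlated, and the variance of `F₂^{(t)}` is at most the
number of overlapping pairs of pairs, `≤ 4 F₃`. As `F₃ ≤ F₂^{3/2}` and `F₂ ≥ n`, Chebyshev's
inequality bounds the probability by `4 F₃ / (10⁻⁴ F₂²) ≤ 40000 / √F₂ ≤ 40000 / √n`.
-/

open Finset Equiv
open scoped Nat

-- The probability that `m` given elements of an `n`-set are all sent into a fixed `t`-subset
-- by a uniformly random permutation.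
noncomputable def subsetProb (n t m : ℕ) : ℝ := t.choose m / n.choose m

lemma subsetProb_nonneg (n t m : ℕ) : 0 ≤ subsetProb n t m := by
  unfold subsetProb; positivity

lemma subsetProb_le_one {n t : ℕ} (h : t ≤ n) (m : ℕ) : subsetProb n t m ≤ 1 :=
  div_le_one_of_le₀ (by exact_mod_cast Nat.choose_le_choose m h) (by positivity)

lemma subsetProb_eq_descFactorial_div (n t m : ℕ) :
    subsetProb n t m = t.descFactorial m / n.descFactorial m := by
  have : (m ! : ℝ) ≠ 0 := by positivity
  simp only [subsetProb, Nat.descFactorial_eq_factorial_mul_choose, Nat.cast_mul,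
    mul_div_mul_left _ _ this]

lemma Nat.sub_add_mul_sub_le {t n : ℕ} (h : t ≤ n) (a b : ℕ) :
    (t - (a + b)) * (n - b) ≤ (t - b) * (n - (a + b)) := by
  rcases le_total t (a + b) with hab | hab
  · simp [Nat.sub_eq_zero_of_le hab]
  · have : a + b ≤ n := hab.trans h
    zify [hab, this, le_of_add_le_right hab, le_of_add_le_right this]
    nlinarith

lemma Nat.descFactorial_add_mul_le {t n : ℕ} (h : t ≤ n) (a b : ℕ) :
    t.descFactorial (a + b) * (n.descFactorial a * n.descFactorial b) ≤
      t.descFactorial a * t.descFactorial b * n.descFactorial (a + b) := by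
  induction b with
  | zero => simp
  | succ b ih =>
    rw [← add_assoc, Nat.descFactorial_succ, Nat.descFactorial_succ, Nat.descFactorial_succ,
      Nat.descFactorial_succ]
    calc (t - (a + b)) * t.descFactorial (a + b) *
          (n.descFactorial a * ((n - b) * n.descFactorial b))
        = ((t - (a + b)) * (n - b)) *
            (t.descFactorial (a + b) * (n.descFactorial a * n.descFactorial b)) := by ring
      _ ≤ ((t - b) * (n - (a + b))) *
            (t.descFactorial a * t.descFactorial b * n.descFactorial (a + b)) :=
        Nat.mul_le_mul (Nat.sub_add_mul_sub_le h a b) ih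
      _ = _ := by ring

lemma subsetProb_add_le_mul {n t : ℕ} (h : t ≤ n) (a b : ℕ) :
    subsetProb n t (a + b) ≤ subsetProb n t a * subsetProb n t b := by
  rcases lt_or_ge n (a + b) with hn | hn
  · rw [subsetProb, Nat.choose_eq_zero_of_lt hn, Nat.cast_zero, div_zero]
    exact mul_nonneg (subsetProb_nonneg ..) (subsetProb_nonneg ..)
  simp only [subsetProb_eq_descFactorial_div]
  have hpos (m : ℕ) (hm : m ≤ n) : (0 : ℝ) < n.descFactorial m := by
    exact_mod_cast Nat.descFactorial_pos.2 hm
  rw [div_mul_div_comm, div_le_div_iff₀ (hpos _ hn)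
    (mul_pos (hpos _ (le_of_add_le_left hn)) (hpos _ (le_of_add_le_right hn)))]
  exact_mod_cast Nat.descFactorial_add_mul_le h a b

lemma subsetProb_union_sub_mul_le {ι : Type*} [DecidableEq ι] {n t : ℕ} (h : t ≤ n)
    (S T : Finset ι) :
    subsetProb n t #(S ∪ T) - subsetProb n t #S * subsetProb n t #T ≤
      if Disjoint S T then 0 else 1 := by
  split_ifs with hST
  · rw [card_union_of_disjoint hST, sub_nonpos]
    exact subsetProb_add_le_mul h _ _
  · linarith [subsetProb_le_one h #(S ∪ T),
      mul_nonneg (subsetProb_nonneg n t #S) (subsetProb_nonneg n t #T)]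

section PermutationCounting

variable {ι : Type*} [Fintype ι] [DecidableEq ι]

lemma card_perm_mapsTo_congr (I : Finset ι) {S S' : Finset ι} (h : #S = #S') :
    #{π : Perm ι | ∀ a ∈ S, π a ∈ I} = #{π : Perm ι | ∀ a ∈ S', π a ∈ I} := by
  let σ := (Finset.equivOfCardEq h.symm).extendSubtype
  have hσ : ∀ a, σ a ∈ S ↔ a ∈ S' := fun a =>
    ⟨fun h => by_contra fun ha => extendSubtype_not_mem _ a ha h, extendSubtype_mem _ a⟩
  refine card_nbij' (· * σ) (· * σ⁻¹) ?_ ?_ ?_ ?_ <;> intro π hπ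
  · simp only [coe_filter, mem_univ, true_and, Set.mem_ofPred_eq, Perm.mul_apply] at hπ ⊢
    exact fun a ha => hπ _ ((hσ a).2 ha)
  · simp only [coe_filter, mem_univ, true_and, Set.mem_ofPred_eq, Perm.mul_apply] at hπ ⊢
    exact fun a ha => hπ _ ((hσ _).1 (by simpa using ha))
  · simp
  · simp

-- Double count the pairs `(T, π)` with `#T = #S` and `π` sending `T` into `I`.
lemma card_perm_mapsTo_mul_choose (S I : Finset ι) :
    #{π : Perm ι | ∀ a ∈ S, π a ∈ I} * (Fintype.card ι).choose #S =
      (Fintype.card ι)! * (#I).choose #S := by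
  have hfiber (π : Perm ι) :
      #{T ∈ powersetCard #S (univ : Finset ι) | ∀ a ∈ T, π a ∈ I} = (#I).choose #S := by
    have : {T ∈ powersetCard #S (univ : Finset ι) | ∀ a ∈ T, π a ∈ I} =
        powersetCard #S (I.map π.symm.toEmbedding) := by
      ext T
      simp [mem_powersetCard, subset_iff, and_comm]
    rw [this, card_powersetCard, card_map]
  calc _ = ∑ T ∈ powersetCard #S univ, #{π : Perm ι | ∀ a ∈ T, π a ∈ I} := by
        rw [sum_congr rfl fun T hT => card_perm_mapsTo_congr I (mem_powersetCard.1 hT).2,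
          sum_const, card_powersetCard, Finset.card_univ, smul_eq_mul, mul_comm]
    _ = ∑ π : Perm ι, #{T ∈ powersetCard #S univ | ∀ a ∈ T, π a ∈ I} :=
        sum_card_bipartiteAbove_eq_sum_card_bipartiteBelow _
    _ = _ := by
        rw [sum_congr rfl fun π _ => hfiber π, sum_const, Finset.card_univ, Fintype.card_perm,
          smul_eq_mul]

lemma card_perm_mapsTo_eq (S I : Finset ι) :
    (#{π : Perm ι | ∀ a ∈ S, π a ∈ I} : ℝ) =
      (Fintype.card ι)! * subsetProb (Fintype.card ι) #I #S := by
  have hchoose : ((Fintype.card ι).choose #S : ℝ) ≠ 0 := by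
    exact_mod_cast (Nat.choose_pos (card_le_univ S)).ne'
  rw [subsetProb, mul_div_assoc', eq_div_iff hchoose]
  exact_mod_cast card_perm_mapsTo_mul_choose S I

end PermutationCounting

section FiniteVariance

variable {Ω : Type*} [Fintype Ω]

lemma sum_sq_sub_mean (X : Ω → ℝ) :
    ∑ ω, (X ω - (∑ ω', X ω') / Fintype.card Ω) ^ 2 =
      ∑ ω, X ω ^ 2 - (∑ ω, X ω) ^ 2 / Fintype.card Ω := by
  rcases isEmpty_or_nonempty Ω with _ | _
  · simp
  have hN : (Fintype.card Ω : ℝ) ≠ 0 := by positivity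
  simp only [sub_sq, sum_add_distrib, sum_sub_distrib, ← sum_mul, ← mul_sum, sum_const,
    card_univ, nsmul_eq_mul]
  field_simp
  ring

lemma card_filter_lt_abs_mul_sq_le (Y : Ω → ℝ) {ε : ℝ} (hε : 0 ≤ ε) :
    #{ω | ε < |Y ω|} * ε ^ 2 ≤ ∑ ω, Y ω ^ 2 := by
  calc #{ω | ε < |Y ω|} * ε ^ 2 = ∑ ω ∈ {ω | ε < |Y ω|}, ε ^ 2 := by
        rw [sum_const, nsmul_eq_mul]
    _ ≤ ∑ ω ∈ {ω | ε < |Y ω|}, Y ω ^ 2 := sum_le_sum fun ω hω => by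
        rw [← sq_abs (Y ω)]
        exact pow_le_pow_left₀ hε (mem_filter.1 hω).2.le 2
    _ ≤ ∑ ω, Y ω ^ 2 := sum_le_sum_of_subset_of_nonneg (subset_univ _) fun _ _ _ => sq_nonneg _

lemma sum_sq_sub_mean_card_filter {κ : Type*} (P : Finset κ) (E : κ → Ω → Prop)
    [∀ p ω, Decidable (E p ω)] :
    ∑ ω, ((#{p ∈ P | E p ω} : ℝ) - (∑ ω', (#{p ∈ P | E p ω'} : ℝ)) / Fintype.card Ω) ^ 2 =
      ∑ p ∈ P, ∑ q ∈ P, ((#{ω | E p ω ∧ E q ω} : ℝ) -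
        #{ω | E p ω} * #{ω | E q ω} / Fintype.card Ω) := by
  have hcount (ω : Ω) : (#{p ∈ P | E p ω} : ℝ) = ∑ p ∈ P, if E p ω then 1 else 0 := by
    rw [sum_boole]
  have hsum : ∑ ω, (#{p ∈ P | E p ω} : ℝ) = ∑ p ∈ P, (#{ω | E p ω} : ℝ) := by
    simp only [hcount]
    rw [sum_comm]
    simp only [sum_boole]
  have hsum_sq : ∑ ω, (#{p ∈ P | E p ω} : ℝ) ^ 2 =
      ∑ p ∈ P, ∑ q ∈ P, (#{ω | E p ω ∧ E q ω} : ℝ) := by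
    simp only [hcount, sq, sum_mul_sum, boole_mul, ← ite_and]
    rw [sum_comm]
    refine sum_congr rfl fun p _ => ?_
    rw [sum_comm]
    simp only [sum_boole]
  rw [sum_sq_sub_mean, hsum, hsum_sq, sq, sum_mul_sum]
  simp only [sum_div, ← sum_sub_distrib]

end FiniteVariance

section Coloring

variable {ι α : Type*} [DecidableEq α]

lemma sum_card_fiber_sq [Fintype α] (s : Finset ι) (c : ι → α) :
    ∑ x, #{i ∈ s | c i = x} ^ 2 = #{p ∈ s ×ˢ s | c p.1 = c p.2} := by
  rw [card_eq_sum_card_fiberwise (f := fun p => c p.1) (t := univ)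
    fun _ _ => mem_coe.2 (mem_univ _)]
  refine sum_congr rfl fun x _ => ?_
  rw [sq, ← card_product]
  congr 1
  ext ⟨i, j⟩
  simp only [mem_product, mem_filter]
  constructor
  · rintro ⟨⟨hi, rfl⟩, hj, hji⟩
    exact ⟨⟨⟨hi, hj⟩, hji.symm⟩, rfl⟩
  · rintro ⟨⟨⟨hi, hj⟩, hij⟩, rfl⟩
    exact ⟨⟨hi, rfl⟩, hj, hij.symm⟩

variable [Fintype ι]

def sameColorPairs (c : ι → α) : Finset (ι × ι) := {p | c p.1 = c p.2}

lemma sum_card_fiber_cube [Fintype α] (c : ι → α) :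
    ∑ x, #{i | c i = x} ^ 3 = #{w : ι × ι × ι | c w.2.1 = c w.1 ∧ c w.2.2 = c w.1} := by
  rw [card_eq_sum_card_fiberwise (f := fun w => c w.1) (t := univ)
    fun _ _ => mem_coe.2 (mem_univ _)]
  refine sum_congr rfl fun x _ => ?_
  rw [pow_succ', sq, ← card_product, ← card_product]
  congr 1
  ext ⟨i, j, k⟩
  simp only [mem_product, mem_filter, mem_univ, true_and]
  constructor
  · rintro ⟨rfl, hj, hk⟩
    exact ⟨⟨hj, hk⟩, rfl⟩
  · rintro ⟨⟨hj, hk⟩, rfl⟩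
    exact ⟨rfl, hj, hk⟩

lemma card_overlapping_sameColorPairs_le [DecidableEq ι] (c : ι → α) :
    #{r ∈ sameColorPairs c ×ˢ sameColorPairs c |
        ¬Disjoint ({r.1.1, r.1.2} : Finset ι) {r.2.1, r.2.2}} ≤
      4 * #{w : ι × ι × ι | c w.2.1 = c w.1 ∧ c w.2.2 = c w.1} := by
  set W : Finset (ι × ι × ι) := {w | c w.2.1 = c w.1 ∧ c w.2.2 = c w.1}
  -- An overlapping pair of pairs is determined by the shared element, the two other elements,
  -- and on which side of each pair the shared element sits.
  let orient (b : Bool) (p : ι × ι) : ι × ι := if b then p else p.swap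
  let g (w : (ι × ι × ι) × (Bool × Bool)) : (ι × ι) × (ι × ι) :=
    (orient w.2.1 (w.1.1, w.1.2.1), orient w.2.2 (w.1.1, w.1.2.2))
  calc _ ≤ #((W ×ˢ (univ : Finset (Bool × Bool))).image g) := card_le_card ?_
    _ ≤ _ := card_image_le.trans (by simp [card_product, mul_comm])
  rintro ⟨⟨a, b⟩, u, v⟩ h
  simp only [sameColorPairs, mem_filter, mem_product, mem_univ, true_and] at h
  obtain ⟨⟨hab, huv⟩, hd⟩ := h
  obtain ⟨x, hx, hx'⟩ := not_disjoint_iff.1 hd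
  simp only [mem_insert, mem_singleton] at hx hx'
  rw [mem_image]
  rcases hx with rfl | rfl <;> rcases hx' with rfl | rfl
  · exact ⟨((x, b, v), true, true), by simp [W]; grind, rfl⟩
  · exact ⟨((x, b, u), true, false), by simp [W]; grind, rfl⟩
  · exact ⟨((x, a, v), false, true), by simp [W]; grind, rfl⟩
  · exact ⟨((x, a, u), false, false), by simp [W]; grind, rfl⟩

end Coloring

section PrefixStatistic

variable {ι α : Type*} [Fintype ι] [DecidableEq ι] [Fintype α] [DecidableEq α]

noncomputable def prefixSecondMoment (c : ι → α) (I : Finset ι) (π : Perm ι) : ℝ :=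
  ∑ x, (#{i | c i = x ∧ π i ∈ I} : ℝ) ^ 2

lemma prefixSecondMoment_eq_card (c : ι → α) (I : Finset ι) (π : Perm ι) :
    prefixSecondMoment c I π =
      #{p ∈ sameColorPairs c | ∀ a ∈ ({p.1, p.2} : Finset ι), π a ∈ I} := by
  have h := sum_card_fiber_sq {i | π i ∈ I} c
  simp only [filter_filter, and_comm (a := π _ ∈ I)] at h
  rw [prefixSecondMoment]
  exact_mod_cast h.trans (congrArg card (by ext; simp [sameColorPairs, and_comm]))

lemma sum_sq_sub_mean_prefixSecondMoment_le (c : ι → α) (I : Finset ι) :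
    ∑ π, (prefixSecondMoment c I π -
        (∑ π', prefixSecondMoment c I π') / (Fintype.card ι)!) ^ 2 ≤
      (Fintype.card ι)! * (4 * ∑ x, (#{i | c i = x} : ℝ) ^ 3) := by
  set N : ℝ := (Nat.factorial (Fintype.card ι) : ℝ)
  have hN : N = Fintype.card (Perm ι) := by rw [Fintype.card_perm]
  have hcov (S T : Finset ι) : (#{π : Perm ι | (∀ a ∈ S, π a ∈ I) ∧ ∀ a ∈ T, π a ∈ I} : ℝ) -
      #{π : Perm ι | ∀ a ∈ S, π a ∈ I} * #{π : Perm ι | ∀ a ∈ T, π a ∈ I} / N ≤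
      N * if ¬Disjoint S T then 1 else 0 := by
    have hN0 : 0 < N := by positivity
    simp only [← forall_mem_union, card_perm_mapsTo_eq, ite_not]
    change N * _ - N * _ * (N * _) / N ≤ _
    calc _ = N * (subsetProb (Fintype.card ι) #I #(S ∪ T) -
          subsetProb (Fintype.card ι) #I #S * subsetProb (Fintype.card ι) #I #T) := by
          field_simp
      _ ≤ _ := mul_le_mul_of_nonneg_left (subsetProb_union_sub_mul_le (card_le_univ I) S T)
          hN0.le
  simp only [prefixSecondMoment_eq_card]
  rw [hN, sum_sq_sub_mean_card_filter, ← hN]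
  calc _ ≤ ∑ p ∈ sameColorPairs c, ∑ q ∈ sameColorPairs c,
        N * if ¬Disjoint ({p.1, p.2} : Finset ι) {q.1, q.2} then 1 else 0 :=
        sum_le_sum fun p _ => sum_le_sum fun q _ => hcov _ _
    _ = N * #{r ∈ sameColorPairs c ×ˢ sameColorPairs c |
          ¬Disjoint ({r.1.1, r.1.2} : Finset ι) {r.2.1, r.2.2}} := by
        rw [← sum_product (f := fun r : (ι × ι) × (ι × ι) =>
          N * if ¬Disjoint ({r.1.1, r.1.2} : Finset ι) {r.2.1, r.2.2} then 1 else 0),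
          ← mul_sum, sum_boole]
    _ ≤ N * (4 * #{w : ι × ι × ι | c w.2.1 = c w.1 ∧ c w.2.2 = c w.1}) := by
        gcongr
        exact_mod_cast card_overlapping_sameColorPairs_le c
    _ = _ := by rw [← sum_card_fiber_cube]; push_cast; rfl

end PrefixStatistic

lemma sum_pow_three_le_sum_sq_mul_sqrt {α : Type*} (s : Finset α) (f : α → ℝ) :
    ∑ x ∈ s, f x ^ 3 ≤ (∑ x ∈ s, f x ^ 2) * √(∑ x ∈ s, f x ^ 2) := by
  rw [sum_mul]
  refine sum_le_sum fun x hx => ?_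
  have : f x ≤ √(∑ y ∈ s, f y ^ 2) :=
    Real.le_sqrt_of_sq_le (single_le_sum (fun y _ => sq_nonneg (f y)) hx)
  rw [pow_succ]
  exact mul_le_mul_of_nonneg_left this (sq_nonneg _)

/-- Claim 6.3 of the paper: in a uniformly-random-order stream with `∑ f_x² ≥ n`, the
prefix second moment `F₂^{(t)}` deviates from its mean by more than `0.01 F₂` with
probability `O(1/√n)`. Probabilities are computed by counting permutations. -/
theorem prefix_second_moment_concentration :
    ∃ C : ℝ, 0 < C ∧
      ∀ (n t : ℕ) (α : Type) (_ : Fintype α) (_ : DecidableEq α)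
        (c : Fin n → α) (f : α → ℕ),
        2 ≤ n → t ≤ n →
        (∀ x, f x = (Finset.univ.filter (fun i => c i = x)).card) →
        ((n : ℝ) ≤ ∑ x, (f x : ℝ) ^ 2) →
        (((Finset.univ.filter (fun π : Equiv.Perm (Fin n) =>
            0.01 * (∑ x, (f x : ℝ) ^ 2) <
              |(∑ x : α, ((Finset.univ.filter
                    (fun i => c i = x ∧ (π i : ℕ) < t)).card : ℝ) ^ 2)
                - (∑ π' : Equiv.Perm (Fin n), ∑ x : α,
                      ((Finset.univ.filter
                        (fun i => c i = x ∧ (π' i : ℕ) < t)).card : ℝ) ^ 2)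
                    / (Nat.factorial n : ℝ)|)).card : ℝ)
            / (Nat.factorial n : ℝ))
          ≤ C / Real.sqrt n := by
  refine ⟨40000, by norm_num, fun n t α _ _ c f hn ht hf hF2 => ?_⟩
  set I : Finset (Fin n) := {j | (j : ℕ) < t}
  set F2 := ∑ x, (f x : ℝ) ^ 2
  have hF2pos : 0 < F2 := lt_of_lt_of_le (by norm_cast; omega) hF2
  have hX (π : Perm (Fin n)) :
      ∑ x, (#{i | c i = x ∧ (π i : ℕ) < t} : ℝ) ^ 2 = prefixSecondMoment c I π := by
    simp [prefixSecondMoment, I]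
  simp only [hX]
  have hvar := sum_sq_sub_mean_prefixSecondMoment_le c I
  simp only [Fintype.card_fin, ← hf] at hvar
  set μ := (∑ π, prefixSecondMoment c I π) / (n ! : ℝ)
  have hF3 := sum_pow_three_le_sum_sq_mul_sqrt univ (fun x => (f x : ℝ))
  have hcheb := (card_filter_lt_abs_mul_sq_le (fun π => prefixSecondMoment c I π - μ)
    (ε := 0.01 * F2) (by positivity)).trans
    (hvar.trans (by gcongr : _ ≤ (n ! : ℝ) * (4 * (F2 * √F2))))
  set Bad := #{π | 0.01 * F2 < |prefixSecondMoment c I π - μ|}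
  have hsqrt : 0 < √F2 := Real.sqrt_pos.2 hF2pos
  have hBad : (Bad : ℝ) * √F2 ≤ 40000 * n ! := by
    refine le_of_mul_le_mul_right ?_ (mul_pos hF2pos hsqrt)
    linear_combination 10000 * hcheb + Bad * F2 * Real.mul_self_sqrt hF2pos.le
  calc (Bad : ℝ) / n ! ≤ 40000 / √F2 := by
        rw [div_le_div_iff₀ (by positivity) hsqrt]; linarith
    _ ≤ 40000 / √n := by gcongr
end
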